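/- Let P ⊂ ℝⁿ be a bounded convex polytope with facets F₁,…,F_d, and let σ₁,…,σ_d be fixed positive measures on the facets (positive constant multiples of the (n−1)-dimensional Hausdorff measure restricted to each facet). For r = (r₁,…,r_d) ∈ ℝ^d_{≥0} let dσ_r = Σᵢ rᵢσᵢ. Then the set of weights r ∈ ℝ^d_{≥0} for which the weighted polytope (P, dσ_r) is stable is a convex subset of ℝ^d_{≥0}. -/

import Mathlib

open MeasureTheory Set
open scoped ENNReal RealInnerProductSpace

noncomputable section

namespace LogStab

/-- `f` is an affine function on `ℝⁿ`. -/
def IsAffineFn {n : ℕ} (f : EuclideanSpace ℝ (Fin n) → ℝ) : Prop :=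
  ∃ (g : EuclideanSpace ℝ (Fin n) →ₗ[ℝ] ℝ) (c : ℝ), ∀ x, f x = g x + c

/-- `f` is piecewise linear: a maximum of finitely many affine functions. -/
def IsPL {n : ℕ} (f : EuclideanSpace ℝ (Fin n) → ℝ) : Prop :=
  ∃ (m : ℕ) (g : Fin (m + 1) → EuclideanSpace ℝ (Fin n) → ℝ),
    (∀ i, IsAffineFn (g i)) ∧
      ∀ x, f x = Finset.univ.sup' Finset.univ_nonempty fun i => g i x

/-- `A` is the affine function associated to the weighted polytope `(P, σ)`:
it is affine and `∫_{∂P} g dσ = ∫_P A g dλ` for every affine `g`. -/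
def IsAssociatedAffine {n : ℕ} (P : Set (EuclideanSpace ℝ (Fin n)))
    (σ : Measure (EuclideanSpace ℝ (Fin n)))
    (A : EuclideanSpace ℝ (Fin n) → ℝ) : Prop :=
  IsAffineFn A ∧
    ∀ g : EuclideanSpace ℝ (Fin n) → ℝ, IsAffineFn g →
      ∫ x, g x ∂σ = ∫ x in P, A x * g x

/-- The functional `L(f) = ∫_{∂P} f dσ − ∫_P A f dλ`. -/
def LF {n : ℕ} (P : Set (EuclideanSpace ℝ (Fin n)))
    (σ : Measure (EuclideanSpace ℝ (Fin n)))
    (A f : EuclideanSpace ℝ (Fin n) → ℝ) : ℝ :=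
  (∫ x, f x ∂σ) - ∫ x in P, A x * f x

/-- `f` coincides with an affine function on `P`. -/
def AffineOn {n : ℕ} (P : Set (EuclideanSpace ℝ (Fin n)))
    (f : EuclideanSpace ℝ (Fin n) → ℝ) : Prop :=
  ∃ g, IsAffineFn g ∧ EqOn f g P

/-- The weighted polytope `(P, σ)` is stable: `L(f) ≥ 0` for every piecewise linear `f`,
with equality iff `f` is affine (on `P`). -/
def IsStable {n : ℕ} (P : Set (EuclideanSpace ℝ (Fin n)))
    (σ : Measure (EuclideanSpace ℝ (Fin n))) : Prop :=
  ∃ A, IsAssociatedAffine P σ A ∧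
    ∀ f, IsPL f → 0 ≤ LF P σ A f ∧ (LF P σ A f = 0 ↔ AffineOn P f)

/-- `(P, σ)` is strictly semistable: `L(f) ≥ 0` for every piecewise linear `f`,
and `L(f) = 0` for some non-affine piecewise linear `f`. -/
def IsStrictlySemistable {n : ℕ} (P : Set (EuclideanSpace ℝ (Fin n)))
    (σ : Measure (EuclideanSpace ℝ (Fin n))) : Prop :=
  ∃ A, IsAssociatedAffine P σ A ∧ (∀ f, IsPL f → 0 ≤ LF P σ A f) ∧
    ∃ f, IsPL f ∧ LF P σ A f = 0 ∧ ¬ AffineOn P f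

/-- A (bounded convex) polytope: the convex hull of a nonempty finite set. -/
def IsPolytope {n : ℕ} (P : Set (EuclideanSpace ℝ (Fin n))) : Prop :=
  ∃ S : Finset (EuclideanSpace ℝ (Fin n)), S.Nonempty ∧
    P = convexHull ℝ (S : Set (EuclideanSpace ℝ (Fin n)))

/-- `F` is the face of `P` cut out by the affine function `g`, nonnegative on `P`. -/
def IsFaceFor {n : ℕ} (P F : Set (EuclideanSpace ℝ (Fin n)))
    (g : EuclideanSpace ℝ (Fin n) → ℝ) : Prop :=
  IsAffineFn g ∧ (∀ x ∈ P, 0 ≤ g x) ∧ F = P ∩ g ⁻¹' {0}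

/-- `F` is a facet of `P`: a nonempty face cut out by a nonconstant affine function,
where the supporting half-space is unique (up to positive scaling). -/
def IsFacetOf {n : ℕ} (P F : Set (EuclideanSpace ℝ (Fin n))) : Prop :=
  F.Nonempty ∧ (∃ g, IsFaceFor P F g ∧ ¬ ∃ c : ℝ, ∀ x, g x = c) ∧
    ∀ g₁ g₂, IsFaceFor P F g₁ → IsFaceFor P F g₂ →
      (¬ ∃ c : ℝ, ∀ x, g₁ x = c) → (¬ ∃ c : ℝ, ∀ x, g₂ x = c) →
      ∃ a : ℝ, 0 < a ∧ ∀ x, g₂ x = a * g₁ x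

/-- The Euclidean plane. -/
abbrev Plane : Type := EuclideanSpace ℝ (Fin 2)

/-- The point `(a, b)` of the plane. -/
def pt (a b : ℝ) : Plane := (WithLp.equiv 2 (Fin 2 → ℝ)).symm ![a, b]

/-- The `i`-th coordinate of a point of the plane. -/
def coord (i : Fin 2) (x : Plane) : ℝ := WithLp.equiv 2 (Fin 2 → ℝ) x i

/-- The segment `[a, b]` is an edge (a facet) of the polygon `P`. -/
def IsEdgeOf (P : Set Plane) (a b : Plane) : Prop :=
  a ≠ b ∧ ∃ g, IsFaceFor P (segment ℝ a b) g ∧ ¬ ∃ c : ℝ, ∀ x, g x = c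

/-- The measure on the segment `[v, w]` obtained as the pushforward of Lebesgue measure
on `[0,1]` under the affine parametrisation of the segment. -/
def segMeasure (v w : Plane) : Measure Plane :=
  Measure.map (fun u : ℝ => (1 - u) • v + u • w) (volume.restrict (Icc (0 : ℝ) 1))

/-- The affine function `l_{s,t}` determined by the points
`p = (1−s)v + sw` and `q = (1−t)v' + tw'`:  `l_{s,t}(x,y) = ax + by + c` with
`a = q₂ − p₂`, `b = p₁ − q₁`, `c = −ap₁ − bp₂`. -/
def creaseFn (v w v' w' : Plane) (s t : ℝ) (x : Plane) : ℝ :=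
  (coord 1 ((1 - t) • v' + t • w') - coord 1 ((1 - s) • v + s • w)) * coord 0 x +
    (coord 0 ((1 - s) • v + s • w) - coord 0 ((1 - t) • v' + t • w')) * coord 1 x +
    (-((coord 1 ((1 - t) • v' + t • w') - coord 1 ((1 - s) • v + s • w)) *
          coord 0 ((1 - s) • v + s • w)) -
      (coord 0 ((1 - s) • v + s • w) - coord 0 ((1 - t) • v' + t • w')) *
        coord 1 ((1 - s) • v + s • w))

/-- `φ(s,t) = L(max{0, l_{s,t}})`, the Donaldson–Futaki invariant of the simple
piecewise linear function with crease `l_{s,t}⁻¹(0)`. -/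
def phiFun (P : Set Plane) (σ : Measure Plane) (A : Plane → ℝ)
    (v w v' w' : Plane) (s t : ℝ) : ℝ :=
  LF P σ A fun x => max 0 (creaseFn v w v' w' s t x)

/-- The Hessian (matrix of second partial derivatives) of `f : ℝ² → ℝ` at `(s₀, t₀)`. -/
def hess (f : ℝ → ℝ → ℝ) (s₀ t₀ : ℝ) : Matrix (Fin 2) (Fin 2) ℝ :=
  !![deriv (fun s => deriv (fun s' => f s' t₀) s) s₀,
      deriv (fun s => deriv (fun t => f s t) t₀) s₀;
      deriv (fun t => deriv (fun s => f s t) s₀) t₀,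
      deriv (fun t => deriv (fun t' => f s₀ t') t) t₀]

/-- The vertices `v₁ = (0,0)`, `v₂ = (1,0)`, `v₃ = (1+p, q)`, `v₄ = (0,k)` of the
quadrilateral `Q`. -/
def quadV (p q k : ℝ) : Fin 4 → Plane := ![pt 0 0, pt 1 0, pt (1 + p) q, pt 0 k]

/-- The quadrilateral `Q` with parameters `p, q, k`. The edge `Eᵢ₊₁` is the segment from
`quadV p q k i` to `quadV p q k (i+1)`. -/
def quadQ (p q k : ℝ) : Set Plane := convexHull ℝ (Set.range (quadV p q k))

/-- The canonical boundary measures on the four edges of `Q`: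
`dx` on `E₁`, `(1/q) dy` on `E₂`, `(1+p) dx` on `E₃` and `dy` on `E₄`. -/
def quadEdgeMeasure (p q k : ℝ) : Fin 4 → Measure Plane :=
  ![segMeasure (pt 0 0) (pt 1 0),
    segMeasure (pt 1 0) (pt (1 + p) q),
    ENNReal.ofReal ((1 + p) ^ 2) • segMeasure (pt (1 + p) q) (pt 0 k),
    ENNReal.ofReal k • segMeasure (pt 0 k) (pt 0 0)]

/-- The boundary measure `dσ_r = Σᵢ rᵢ Eᵢ` on `∂Q` with weights `r`. -/
def quadMeasure (p q k : ℝ) (r : Fin 4 → ℝ) : Measure Plane :=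
  ∑ i, ENNReal.ofReal (r i) • quadEdgeMeasure p q k i

/-- The weight `(1−r) Eᵢ + r Eⱼ`. -/
def wt (i j : Fin 4) (r : ℝ) : Fin 4 → ℝ := fun m =>
  if m = i then 1 - r else if m = j then r else 0

/-- The segments `[a,b]` and `[c,d]` are parallel. -/
def Parallel2 (a b c d : Plane) : Prop := ∃ t : ℝ, d - c = t • (b - a)

/-- Edges `i` and `j` of the quadrilateral `Q` are parallel. -/
def quadEdgesParallel (p q k : ℝ) (i j : Fin 4) : Prop :=
  Parallel2 (quadV p q k i) (quadV p q k (i + 1)) (quadV p q k j) (quadV p q k (j + 1))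

/-- The function `φ` associated to the pair of opposite edges of `Q` adjacent to the
edge `e`, normalised so that the parameter `(0,0)` corresponds to the crease being the
edge `e`, and `(1,0)`, `(0,1)` correspond to the creases being the two diagonals of `Q`. -/
def phiAtEdge (p q k : ℝ) (σ : Measure Plane) (A : Plane → ℝ) (e : Fin 4)
    (s t : ℝ) : ℝ :=
  phiFun (quadQ p q k) σ A (quadV p q k (e + 1)) (quadV p q k (e + 2))
    (quadV p q k e) (quadV p q k (e + 3)) s t

/-- `v` lists, in cyclic order, the vertices of a convex quadrilateral: each consecutive
segment is an edge (facet) of the convex hull of the four points. -/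
def IsConvexQuad (v : Fin 4 → Plane) : Prop :=
  ∀ i : Fin 4, IsEdgeOf (convexHull ℝ (Set.range v)) (v i) (v (i + 1))

/-- The nonnegative boundary measure on the quadrilateral with vertices `v` assigning to
the edge from `v i` to `v (i+1)` the weight `r i` (times 1-dimensional Hausdorff measure). -/
def genQuadMeasure (v : Fin 4 → Plane) (r : Fin 4 → ℝ) : Measure Plane :=
  ∑ i, ENNReal.ofReal (r i) •
    (μH[1] : Measure Plane).restrict (segment ℝ (v i) (v (i + 1)))

/-- The `i`-th coordinate of a point of `ℝⁿ`. -/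
def coordN {n : ℕ} (x : EuclideanSpace ℝ (Fin n)) (i : Fin n) : ℝ :=
  WithLp.equiv 2 (Fin n → ℝ) x i

/-- The partial derivative `∂ᵢ g` of `g : ℝⁿ → ℝ`. -/
def pd {n : ℕ} (i : Fin n) (g : EuclideanSpace ℝ (Fin n) → ℝ)
    (x : EuclideanSpace ℝ (Fin n)) : ℝ :=
  fderiv ℝ g x (EuclideanSpace.single i 1)

/-!
The stable weights form a convex set because everything in the definition of stability is
linear in the boundary measure. If `Aᵣ` and `Aᵣ'` are the affine functions associated to
`σᵣ` and `σᵣ'`, then `(1 - t) Aᵣ + t Aᵣ'` is associated to `σ_{(1-t)r + tr'}`, and the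
functional `L` of the combination is `(1 - t) Lᵣ + t Lᵣ'`: a convex combination of two
nonnegative functionals, each vanishing exactly on the functions that are affine on `P`.
The only analytic input is that continuous functions are integrable against each `σᵢ`: a facet
is a compact subset of a hyperplane, so its `(n - 1)`-dimensional Hausdorff measure is finite.
-/

open Module

theorem IsAffineFn.continuous {n : ℕ} {f : EuclideanSpace ℝ (Fin n) → ℝ}
    (hf : IsAffineFn f) : Continuous f := by
  obtain ⟨g, c, h⟩ := hf
  rw [funext h]
  exact g.continuous_of_finiteDimensional.add continuous_const

theorem IsPL.continuous {n : ℕ} {f : EuclideanSpace ℝ (Fin n) → ℝ}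
    (hf : IsPL f) : Continuous f := by
  obtain ⟨m, g, hg, h⟩ := hf
  rw [funext h]
  exact Continuous.finset_sup'_apply _ fun i _ => (hg i).continuous

theorem IsAffineFn.mul_add_mul {n : ℕ} {A₁ A₂ : EuclideanSpace ℝ (Fin n) → ℝ}
    (h₁ : IsAffineFn A₁) (h₂ : IsAffineFn A₂) (a b : ℝ) :
    IsAffineFn fun x => a * A₁ x + b * A₂ x := by
  obtain ⟨g₁, c₁, hg₁⟩ := h₁
  obtain ⟨g₂, c₂, hg₂⟩ := h₂
  refine ⟨a • g₁ + b • g₂, a * c₁ + b * c₂, fun x => ?_⟩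
  simp only [hg₁ x, hg₂ x, LinearMap.add_apply, LinearMap.smul_apply, smul_eq_mul]
  ring

theorem _root_.IsCompact.hausdorffMeasure_finrank_ne_top {V : Type*} [NormedAddCommGroup V]
    [NormedSpace ℝ V] [FiniteDimensional ℝ V] [MeasurableSpace V] [BorelSpace V]
    {K : Set V} (hK : IsCompact K) : μH[(finrank ℝ V : ℝ)] K ≠ ∞ := by
  set m := finrank ℝ V
  let e : (Fin m → ℝ) ≃L[ℝ] V := .ofFinrankEq (finrank_fin_fun ℝ)
  rw [← e.image_symm_image K]
  refine ne_top_of_le_ne_top ?_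
    ((e : (Fin m → ℝ) →L[ℝ] V).lipschitz.hausdorffMeasure_image_le (Nat.cast_nonneg m) _)
  have hvol : (μH[(m : ℝ)] : Measure (Fin m → ℝ)) = volume := by
    simpa using hausdorffMeasure_pi_real (ι := Fin m)
  rw [hvol]
  exact ENNReal.mul_ne_top (by simp) (hK.image e.symm.continuous).measure_ne_top

theorem _root_.IsCompact.hausdorffMeasure_ne_top_of_subset_level {E : Type*}
    [NormedAddCommGroup E] [NormedSpace ℝ E] [FiniteDimensional ℝ E]
    [MeasurableSpace E] [BorelSpace E]
    {g : E →ₗ[ℝ] ℝ} (hg : g ≠ 0) {c : ℝ} {K : Set E} (hK : IsCompact K)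
    (hKc : K ⊆ g ⁻¹' {c}) : μH[(finrank ℝ E : ℝ) - 1] K ≠ ∞ := by
  obtain rfl | ⟨x₀, hx₀⟩ := K.eq_empty_or_nonempty
  · simp
  let ι : LinearMap.ker g → E := fun w => x₀ + w
  have hι : Isometry ι := Isometry.of_dist_eq fun w w' => dist_add_left _ _ _
  have hKι : K ⊆ range ι := fun y hy =>
    ⟨⟨y - x₀, by rw [LinearMap.mem_ker, map_sub, show g y = c from hKc hy,
      show g x₀ = c from hKc hx₀, sub_self]⟩, by simp [ι]⟩
  have hdim : (finrank ℝ E : ℝ) - 1 = finrank ℝ (LinearMap.ker g) := by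
    rw [← Module.Dual.finrank_ker_add_one_of_ne_zero hg]
    push_cast
    ring
  rw [hdim, ← inter_eq_left.2 hKι, ← hι.hausdorffMeasure_preimage (.inl (Nat.cast_nonneg _))]
  exact (hι.isClosedEmbedding.isCompact_preimage hK).hausdorffMeasure_finrank_ne_top

section Facet

variable {n : ℕ} {P F : Set (EuclideanSpace ℝ (Fin n))}

theorem IsFacetOf.isCompact (hP : IsCompact P) (hF : IsFacetOf P F) : IsCompact F := by
  obtain ⟨-, ⟨g, ⟨hg, -, rfl⟩, -⟩, -⟩ := hF
  exact hP.inter_right (isClosed_singleton.preimage hg.continuous)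

theorem IsFacetOf.hausdorffMeasure_ne_top (hP : IsCompact P) (hF : IsFacetOf P F) :
    μH[(n : ℝ) - 1] F ≠ ∞ := by
  have hFc := hF.isCompact hP
  obtain ⟨-, ⟨g, ⟨⟨l, c, hg⟩, -, rfl⟩, hgc⟩, -⟩ := hF
  have hl : l ≠ 0 := by
    rintro rfl
    exact hgc ⟨c, by simpa using hg⟩
  have hlevel : P ∩ g ⁻¹' {0} ⊆ l ⁻¹' {-c} := fun x hx => by
    have : g x = 0 := hx.2
    simp only [mem_preimage, mem_singleton_iff]
    linarith [hg x]
  simpa using hFc.hausdorffMeasure_ne_top_of_subset_level hl hlevel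

theorem IsFacetOf.integrable_smul_hausdorffMeasure (hP : IsCompact P) (hF : IsFacetOf P F)
    {a : ℝ≥0∞} (ha : a ≠ ∞) {f : EuclideanSpace ℝ (Fin n) → ℝ} (hf : Continuous f) :
    Integrable f (a • (μH[(n : ℝ) - 1] : Measure (EuclideanSpace ℝ (Fin n))).restrict F) :=
  have hFc := hF.isCompact hP
  (hf.continuousOn.integrableOn_of_subset_isCompact hFc hFc.measurableSet subset_rfl
    (hF.hausdorffMeasure_ne_top hP)).smul_measure ha

end Facet

theorem integrable_sum_ofReal_smul_measure {ι α : Type*} [Fintype ι] [MeasurableSpace α]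
    {σ : ι → Measure α} {f : α → ℝ} (hf : ∀ i, Integrable f (σ i)) (r : ι → ℝ) :
    Integrable f (∑ i, ENNReal.ofReal (r i) • σ i) :=
  integrable_finsetSum_measure.2 fun i _ => (hf i).smul_measure ENNReal.ofReal_ne_top

theorem sum_ofReal_smul_add_smul {ι α : Type*} [Fintype ι] [MeasurableSpace α]
    (σ : ι → Measure α) {r₁ r₂ : ι → ℝ} (hr₁ : 0 ≤ r₁) (hr₂ : 0 ≤ r₂) {a b : ℝ}
    (ha : 0 ≤ a) (hb : 0 ≤ b) :
    ∑ i, ENNReal.ofReal ((a • r₁ + b • r₂) i) • σ i =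
      ENNReal.ofReal a • ∑ i, ENNReal.ofReal (r₁ i) • σ i +
        ENNReal.ofReal b • ∑ i, ENNReal.ofReal (r₂ i) • σ i := by
  rw [Finset.smul_sum, Finset.smul_sum, ← Finset.sum_add_distrib]
  refine Finset.sum_congr rfl fun i _ => ?_
  rw [Pi.add_apply, Pi.smul_apply, Pi.smul_apply, smul_eq_mul, smul_eq_mul,
    ENNReal.ofReal_add (mul_nonneg ha (hr₁ i)) (mul_nonneg hb (hr₂ i)),
    ENNReal.ofReal_mul ha, ENNReal.ofReal_mul hb, add_smul, smul_smul, smul_smul]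

theorem mul_add_mul_eq_zero_iff {a b x y : ℝ} {p : Prop} (ha : 0 ≤ a) (hb : 0 ≤ b)
    (hab : a + b = 1) (hx : 0 ≤ x) (hy : 0 ≤ y) (hxp : x = 0 ↔ p) (hyp : y = 0 ↔ p) :
    a * x + b * y = 0 ↔ p := by
  refine ⟨fun h => ?_, fun hp => by simp [hxp.2 hp, hyp.2 hp]⟩
  obtain ⟨hax, hby⟩ := (add_eq_zero_iff_of_nonneg (mul_nonneg ha hx) (mul_nonneg hb hy)).1 h
  rcases eq_or_ne a 0 with rfl | ha0
  · exact hyp.1 ((mul_eq_zero.1 hby).resolve_left (by linarith))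
  · exact hxp.1 ((mul_eq_zero.1 hax).resolve_left ha0)

section Stability

variable {n : ℕ} {P : Set (EuclideanSpace ℝ (Fin n))}
  {μ ν : Measure (EuclideanSpace ℝ (Fin n))}

theorem isAssociatedAffine_iff_LF_eq_zero {A : EuclideanSpace ℝ (Fin n) → ℝ} :
    IsAssociatedAffine P μ A ↔ IsAffineFn A ∧ ∀ g, IsAffineFn g → LF P μ A g = 0 := by
  simp only [IsAssociatedAffine, LF, sub_eq_zero]

theorem LF_smul_add_smul {A₁ A₂ f : EuclideanSpace ℝ (Fin n) → ℝ} {a b : ℝ}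
    (ha : 0 ≤ a) (hb : 0 ≤ b) (hμ : Integrable f μ) (hν : Integrable f ν)
    (h₁ : IntegrableOn (fun x => A₁ x * f x) P) (h₂ : IntegrableOn (fun x => A₂ x * f x) P) :
    LF P (ENNReal.ofReal a • μ + ENNReal.ofReal b • ν) (fun x => a * A₁ x + b * A₂ x) f =
      a * LF P μ A₁ f + b * LF P ν A₂ f := by
  have hmul : (fun x => (a * A₁ x + b * A₂ x) * f x) =
      fun x => a * (A₁ x * f x) + b * (A₂ x * f x) := by
    funext x
    ring
  simp only [LF]
  rw [integral_add_measure (hμ.smul_measure ENNReal.ofReal_ne_top)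
      (hν.smul_measure ENNReal.ofReal_ne_top), integral_smul_measure, integral_smul_measure,
    ENNReal.toReal_ofReal ha, ENNReal.toReal_ofReal hb, hmul,
    integral_add (h₁.const_mul a) (h₂.const_mul b), integral_const_mul, integral_const_mul,
    smul_eq_mul, smul_eq_mul]
  ring

theorem IsStable.smul_add_smul (hP : IsCompact P)
    (hμ : ∀ f : EuclideanSpace ℝ (Fin n) → ℝ, Continuous f → Integrable f μ)
    (hν : ∀ f : EuclideanSpace ℝ (Fin n) → ℝ, Continuous f → Integrable f ν)
    (h₁ : IsStable P μ) (h₂ : IsStable P ν) {a b : ℝ} (ha : 0 ≤ a) (hb : 0 ≤ b)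
    (hab : a + b = 1) : IsStable P (ENNReal.ofReal a • μ + ENNReal.ofReal b • ν) := by
  obtain ⟨A₁, hA₁, hst₁⟩ := h₁
  obtain ⟨A₂, hA₂, hst₂⟩ := h₂
  rw [isAssociatedAffine_iff_LF_eq_zero] at hA₁ hA₂
  have hL : ∀ f, Continuous f →
      LF P (ENNReal.ofReal a • μ + ENNReal.ofReal b • ν) (fun x => a * A₁ x + b * A₂ x) f =
        a * LF P μ A₁ f + b * LF P ν A₂ f := fun f hf =>
    LF_smul_add_smul ha hb (hμ f hf) (hν f hf)
      ((hA₁.1.continuous.mul hf).continuousOn.integrableOn_compact hP)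
      ((hA₂.1.continuous.mul hf).continuousOn.integrableOn_compact hP)
  refine ⟨_, isAssociatedAffine_iff_LF_eq_zero.2 ⟨hA₁.1.mul_add_mul hA₂.1 a b, fun g hg => ?_⟩,
    fun f hf => ?_⟩
  · rw [hL g hg.continuous, hA₁.2 g hg, hA₂.2 g hg]
    ring
  · obtain ⟨hL₁, hL₁eq⟩ := hst₁ f hf
    obtain ⟨hL₂, hL₂eq⟩ := hst₂ f hf
    rw [hL f hf.continuous]
    exact ⟨add_nonneg (mul_nonneg ha hL₁) (mul_nonneg hb hL₂),
      mul_add_mul_eq_zero_iff ha hb hab hL₁ hL₂ hL₁eq hL₂eq⟩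

end Stability

theorem statement0_general (n d : ℕ) (P : Set (EuclideanSpace ℝ (Fin n)))
    (hP : IsPolytope P)
    (F : Fin d → Set (EuclideanSpace ℝ (Fin n)))
    (hF : ∀ i, IsFacetOf P (F i))
    (c : Fin d → ℝ)
    (σ : Fin d → Measure (EuclideanSpace ℝ (Fin n)))
    (hσ : ∀ i, σ i = ENNReal.ofReal (c i) •
      (μH[(n : ℝ) - 1] : Measure (EuclideanSpace ℝ (Fin n))).restrict (F i)) :
    Convex ℝ {r : Fin d → ℝ | (∀ i, 0 ≤ r i) ∧
      IsStable P (∑ i, ENNReal.ofReal (r i) • σ i)} := by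
  obtain ⟨S, -, rfl⟩ := hP
  have hPc : IsCompact (convexHull ℝ (S : Set (EuclideanSpace ℝ (Fin n)))) :=
    S.finite_toSet.isCompact_convexHull (𝕜 := ℝ)
  have hσ_int : ∀ f, Continuous f → ∀ i, Integrable f (σ i) := fun f hf i =>
    hσ i ▸ (hF i).integrable_smul_hausdorffMeasure hPc ENNReal.ofReal_ne_top hf
  rintro r₁ ⟨hr₁, hst₁⟩ r₂ ⟨hr₂, hst₂⟩ a b ha hb hab
  refine ⟨fun i => add_nonneg (mul_nonneg ha (hr₁ i)) (mul_nonneg hb (hr₂ i)), ?_⟩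
  rw [sum_ofReal_smul_add_smul σ hr₁ hr₂ ha hb]
  exact IsStable.smul_add_smul hPc
    (fun f hf => integrable_sum_ofReal_smul_measure (hσ_int f hf) r₁)
    (fun f hf => integrable_sum_ofReal_smul_measure (hσ_int f hf) r₂) hst₁ hst₂ ha hb hab

/-- For a bounded convex polytope `P ⊆ ℝⁿ` with facets `F₁, …, F_d`
carrying fixed positive measures `σᵢ` (positive constant multiples of `(n−1)`-dimensional
Hausdorff measure on the facets), the set of weights `r ∈ ℝ^d_{≥0}` for which
`(P, Σᵢ rᵢ σᵢ)` is stable is a convex subset of `ℝ^d_{≥0}`. -/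
theorem statement0 (n d : ℕ) (P : Set (EuclideanSpace ℝ (Fin n)))
    (hP : IsPolytope P)
    (F : Fin d → Set (EuclideanSpace ℝ (Fin n)))
    (hF : ∀ i, IsFacetOf P (F i))
    (hFall : ∀ G, IsFacetOf P G → ∃ i, G = F i)
    (c : Fin d → ℝ) (hc : ∀ i, 0 < c i)
    (σ : Fin d → Measure (EuclideanSpace ℝ (Fin n)))
    (hσ : ∀ i, σ i = ENNReal.ofReal (c i) •
      (μH[(n : ℝ) - 1] : Measure (EuclideanSpace ℝ (Fin n))).restrict (F i)) :
    Convex ℝ {r : Fin d → ℝ | (∀ i, 0 ≤ r i) ∧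
      IsStable P (∑ i, ENNReal.ofReal (r i) • σ i)} :=
  statement0_general n d P hP F hF c σ hσ

end LogStab
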